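/- arXiv:1510.05309 — 2 statements merged into one kernel-verified Lean document; each statement's English description precedes it below -/
import Mathlib

section
/- Let $n$ be a normalizer of $D(E)$ in $A_R(G_E)$ over an integral domain $R$, with $\operatorname{dom}(n) = \operatorname{supp}(n^*n)$ and $\operatorname{ran}(n) = \operatorname{supp}(nn^*)$. If $x \in \operatorname{dom}(n)$, then $\alpha_n(x) \in \operatorname{ran}(n)$, where $\alpha_n(x) = r(\operatorname{supp}(n)x)$. -/
open scoped Classical BigOperators

namespace LPA

structure DirGraph where
  V : Type
  E : Type
  r : E → V
  s : E → V

structure InfPath (G : DirGraph) where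
  edges : ℕ → G.E
  compat : ∀ i, G.s (edges i) = G.r (edges (i + 1))

structure FinPath (G : DirGraph) where
  len : ℕ
  vtx : G.V
  edges : ℕ → G.E
  compat : ∀ i, i + 1 < len → G.s (edges i) = G.r (edges (i + 1))
  vtx_eq : 0 < len → vtx = G.r (edges 0)

variable {G : DirGraph}

/-- The source vertex of a finite path (its `vtx` if it has length `0`). -/
def FinPath.src (μ : FinPath G) : G.V :=
  if μ.len = 0 then μ.vtx else G.s (μ.edges (μ.len - 1))

/-- The range vertex of an infinite path. -/
def InfPath.rng (x : InfPath G) : G.V := G.r (x.edges 0)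

/-- `x ∼ₖ y`: shift equivalence with lag `k`. -/
def ShiftEquiv (x : InfPath G) (k : ℤ) (y : InfPath G) : Prop :=
  ∃ a b N : ℕ, (a : ℤ) - (b : ℤ) = k ∧ ∀ i, N ≤ i → x.edges (i + a) = y.edges (i + b)

def RowFinite (G : DirGraph) : Prop := ∀ v : G.V, {e : G.E | G.r e = v}.Finite

def NoSources (G : DirGraph) : Prop := ∀ v : G.V, ∃ e : G.E, G.r e = v

/-- `x = μ z`: the infinite path `x` is the concatenation of the finite path `μ`
with the infinite path `z`. -/
def IsConcat (μ : FinPath G) (z x : InfPath G) : Prop :=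
  z.rng = μ.src ∧ ∀ i, x.edges i = if i < μ.len then μ.edges i else z.edges (i - μ.len)

/-- `ρ = μ β`: concatenation of finite paths. -/
def IsAppendF (μ β ρ : FinPath G) : Prop :=
  ρ.len = μ.len + β.len ∧ (∀ i < μ.len, ρ.edges i = μ.edges i) ∧
    (∀ i < β.len, ρ.edges (μ.len + i) = β.edges i) ∧
    ρ.vtx = if μ.len = 0 then β.vtx else μ.vtx

/-- Triples `(x, k, y)`: the ambient type of the graph groupoid. -/
abbrev GTrip (G : DirGraph) := InfPath G × ℤ × InfPath G

def gmul (g h : GTrip G) : GTrip G := (g.1, g.2.1 + h.2.1, h.2.2)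
def ginv (g : GTrip G) : GTrip G := (g.2.2, -g.2.1, g.1)
def unit (x : InfPath G) : GTrip G := (x, 0, x)

def GraphGroupoid (G : DirGraph) : Set (GTrip G) :=
  {g | ShiftEquiv g.1 g.2.1 g.2.2}

/-- `BC` for subsets of the groupoid. -/
def setMul (B C : Set (GTrip G)) : Set (GTrip G) :=
  {g | ∃ γ ∈ B, ∃ η ∈ C, γ.2.2 = η.1 ∧ g = gmul γ η}

def setInv (B : Set (GTrip G)) : Set (GTrip G) := ginv '' B

/-- The cylinder set `Z(μ)` of infinite paths extending `μ`. -/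
def Zset (μ : FinPath G) : Set (InfPath G) :=
  {x | (∀ i < μ.len, x.edges i = μ.edges i) ∧ x.rng = μ.vtx}

/-- The basic compact open bisection `Z(μ,ν) = {(μz, |μ|-|ν|, νz)}`. -/
def ZZ (μ ν : FinPath G) : Set (GTrip G) :=
  {g | ∃ z : InfPath G, IsConcat μ z g.1 ∧ IsConcat ν z g.2.2 ∧
    g.2.1 = (μ.len : ℤ) - (ν.len : ℤ)}

instance : TopologicalSpace (InfPath G) :=
  TopologicalSpace.generateFrom {S | ∃ μ : FinPath G, S = Zset μ}

def unitSet (S : Set (InfPath G)) : Set (GTrip G) := {g | ∃ x ∈ S, g = unit x}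

variable (R : Type) [CommRing R]

/-- The diagonal `D(E)` of the Steinberg algebra. -/
noncomputable def Diag (G : DirGraph) : Submodule R (GTrip G → R) :=
  Submodule.span R {f | ∃ μ : FinPath G, f = Set.indicator (unitSet (Zset μ)) 1}

/-- The Steinberg algebra `A_R(G_E)` as a set of functions on the groupoid. -/
noncomputable def Steinberg (G : DirGraph) : Submodule R (GTrip G → R) :=
  Submodule.span R
    {f | ∃ μ ν : FinPath G, μ.src = ν.src ∧ f = Set.indicator (ZZ μ ν) 1}

variable {R}

/-- Convolution product. -/
noncomputable def conv (f g : GTrip G → R) : GTrip G → R :=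
  fun γ => ∑ᶠ η ∈ {η : GTrip G | η.1 = γ.1}, f η * g (gmul (ginv η) γ)

/-- Involution `f^*(γ) = star (f (γ⁻¹))`. -/
def starf [StarRing R] (f : GTrip G → R) : GTrip G → R :=
  fun γ => star (f (ginv γ))

/-- `n` is a normalizer of the diagonal. -/
def IsNormalizer [StarRing R] (n : GTrip G → R) : Prop :=
  n ∈ Steinberg R G ∧ ∀ d ∈ Diag R G,
    conv (conv n d) (starf n) ∈ Diag R G ∧ conv (conv (starf n) d) n ∈ Diag R G

/-- `α_n(x) = r(supp(n) x)` (given by a choice; unique for normalizers). -/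
noncomputable def alphaFun (n : GTrip G → R) (x : InfPath G) : InfPath G :=
  if h : ∃ g : GTrip G, n g ≠ 0 ∧ g.2.2 = x then h.choose.1 else x

/-- `dom(n) = supp(n^* n)`, as a subset of the infinite path space. -/
noncomputable def domSet [StarRing R] (n : GTrip G → R) : Set (InfPath G) :=
  {x | conv (starf n) n (unit x) ≠ 0}

/-- `ran(n) = supp(n n^*)`, as a subset of the infinite path space. -/
noncomputable def ranSet [StarRing R] (n : GTrip G → R) : Set (InfPath G) :=
  {x | conv n (starf n) (unit x) ≠ 0}

/-- `d ∘ α_n`, viewed as a function on the groupoid vanishing off `s(supp n)`. -/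
noncomputable def dAlpha (d n : GTrip G → R) : GTrip G → R := fun g =>
  if (g.2.1 = 0 ∧ g.1 = g.2.2 ∧ ∃ h : GTrip G, n h ≠ 0 ∧ h.2.2 = g.2.2)
  then d (unit (alphaFun n g.2.2)) else 0

/-- `p_x`, the characteristic function of the unit `{x}`. -/
noncomputable def ppt (R : Type) [CommRing R] (x : InfPath G) : GTrip G → R :=
  Set.indicator {unit x} 1

/-- `f` is homogeneous of degree `k`. -/
def Homog (k : ℤ) (f : GTrip G → R) : Prop := ∀ g : GTrip G, f g ≠ 0 → g.2.1 = k

def IsCycle (η : FinPath G) : Prop :=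
  0 < η.len ∧ η.src = η.vtx ∧
    ∀ i j, 0 < i → i + 1 < η.len → 0 < j → j + 1 < η.len → i ≠ j →
      G.s (η.edges i) ≠ G.r (η.edges j)

def HasEntrance (η : FinPath G) : Prop :=
  ∃ (e : G.E) (i : ℕ), i < η.len ∧ G.r e = G.r (η.edges i) ∧ e ≠ η.edges i

/-- `z = η η η ⋯`. -/
def IsPeriodicOf (η : FinPath G) (z : InfPath G) : Prop :=
  ∀ i, z.edges i = η.edges (i % η.len)

/-!
Let `g ∈ supp n` with `s(g) = x`, so that `α_n(x) = r(g) =: y`. Since `supp n` lies in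
finitely many bisections `Z(μ, ν)`, the paths `r(h)`, `s(h)` for `h ∈ supp n` start in a
finite set `F` of vertices, and the indicator `d` of the units over the paths starting in `F`
is a local unit for `n` in `D(E)`: `n d = n` and `n^* d = n^*`. Hence `n n^* = n d n^*` and
`n^* n = n^* d n` lie in `D(E)` and vanish off the unit space. The same finiteness makes
`(n n^*) n = n (n^* n)` hold at `g`, where it reads `(n n^*)(y) n(g) = n(g) (n^* n)(x)`.
The right side is nonzero in the domain `R`, so `y ∈ ran(n)`.
-/

open Function Set

section Paths

@[ext]
theorem InfPath.ext {x y : InfPath G} (h : x.edges = y.edges) : x = y := by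
  cases x; cases y; congr

theorem IsConcat.rng_eq {μ : FinPath G} {z x : InfPath G} (h : IsConcat μ z x) :
    x.rng = μ.vtx := by
  obtain ⟨hz, hx⟩ := h
  rcases Nat.eq_zero_or_pos μ.len with hμ | hμ
  · simpa [InfPath.rng, hx 0, hμ, FinPath.src] using hz
  · simp [InfPath.rng, hx 0, hμ, μ.vtx_eq hμ]

theorem IsConcat.tail_unique {μ : FinPath G} {z z' x : InfPath G} (h : IsConcat μ z x)
    (h' : IsConcat μ z' x) : z = z' := by
  ext j
  have e := h.2 (j + μ.len)
  have e' := h'.2 (j + μ.len)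
  simp only [show ¬ j + μ.len < μ.len by omega, if_false, Nat.add_sub_cancel] at e e'
  rw [← e, ← e']

theorem IsConcat.unique {μ : FinPath G} {z x x' : InfPath G} (h : IsConcat μ z x)
    (h' : IsConcat μ z x') : x = x' := by
  ext i
  rw [h.2 i, h'.2 i]

theorem ZZ_injOn_fst (μ ν : FinPath G) : (ZZ μ ν).InjOn Prod.fst := by
  rintro g ⟨z, hμ, hν, hk⟩ g' ⟨z', hμ', hν', hk'⟩ (h : g.1 = g'.1)
  rw [← h] at hμ'
  obtain rfl := hμ.tail_unique hμ'
  exact Prod.ext h (Prod.ext (hk.trans hk'.symm) (hν.unique hν'))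

theorem ZZ_injOn_snd_snd (μ ν : FinPath G) : (ZZ μ ν).InjOn fun g => g.2.2 := by
  rintro g ⟨z, hμ, hν, hk⟩ g' ⟨z', hμ', hν', hk'⟩ (h : g.2.2 = g'.2.2)
  rw [← h] at hν'
  obtain rfl := hν.tail_unique hν'
  exact Prod.ext (hμ.unique hμ') (Prod.ext (hk.trans hk'.symm) h)

end Paths

section Steinberg

variable {R : Type} [CommRing R]

theorem exists_support_subset_biUnion_ZZ {f : GTrip G → R} (hf : f ∈ Steinberg R G) :
    ∃ s : Finset (FinPath G × FinPath G), support f ⊆ ⋃ p ∈ s, ZZ p.1 p.2 := by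
  induction hf using Submodule.span_induction with
  | mem f hf =>
    obtain ⟨μ, ν, -, rfl⟩ := hf
    exact ⟨{(μ, ν)}, by simp⟩
  | zero => exact ⟨∅, by simp⟩
  | add f g _ _ hf hg =>
    obtain ⟨s, hs⟩ := hf
    obtain ⟨t, ht⟩ := hg
    refine ⟨s ∪ t, (support_add f g).trans ?_⟩
    rw [Finset.set_biUnion_union]
    exact union_subset_union hs ht
  | smul c f _ hf =>
    obtain ⟨s, hs⟩ := hf
    exact ⟨s, (support_const_smul_subset c f).trans hs⟩

theorem finite_support_rangeFiber_of_mem_steinberg {f : GTrip G → R} (hf : f ∈ Steinberg R G)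
    (w : InfPath G) :
    (support fun p : ℤ × InfPath G => f (w, p)).Finite := by
  obtain ⟨s, hs⟩ := exists_support_subset_biUnion_ZZ hf
  have hsub : (support fun p => f (w, p)) ⊆ ⋃ p ∈ s, Prod.mk w ⁻¹' ZZ p.1 p.2 :=
    fun q hq => by simpa using hs hq
  refine (s.finite_toSet.biUnion fun p _ => ?_).subset hsub
  exact Subsingleton.finite fun q hq q' hq' =>
    Prod.mk_right_injective w (ZZ_injOn_fst p.1 p.2 hq hq' rfl)

theorem finite_support_sourceFiber_of_mem_steinberg {f : GTrip G → R} (hf : f ∈ Steinberg R G)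
    (w : InfPath G) :
    (support fun p : InfPath G × ℤ => f (p.1, p.2, w)).Finite := by
  obtain ⟨s, hs⟩ := exists_support_subset_biUnion_ZZ hf
  have hsub : (support fun p : InfPath G × ℤ => f (p.1, p.2, w)) ⊆
      ⋃ p ∈ s, (fun q : InfPath G × ℤ => (q.1, q.2, w)) ⁻¹' ZZ p.1 p.2 :=
    fun q hq => by simpa using hs hq
  refine (s.finite_toSet.biUnion fun p _ => ?_).subset hsub
  refine Subsingleton.finite fun q hq q' hq' => ?_
  have h := ZZ_injOn_snd_snd p.1 p.2 hq hq' rfl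
  simp only [Prod.mk.injEq] at h
  exact Prod.ext h.1 h.2.1

theorem exists_finset_rng_of_mem_steinberg {f : GTrip G → R} (hf : f ∈ Steinberg R G) :
    ∃ F : Finset G.V, ∀ g, f g ≠ 0 → g.1.rng ∈ F ∧ g.2.2.rng ∈ F := by
  obtain ⟨s, hs⟩ := exists_support_subset_biUnion_ZZ hf
  refine ⟨s.image (·.1.vtx) ∪ s.image (·.2.vtx), fun g hg => ?_⟩
  obtain ⟨p, hp, z, hμ, hν, -⟩ := mem_iUnion₂.1 (hs hg)
  simp only [Finset.mem_union, Finset.mem_image]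
  exact ⟨.inl ⟨p, hp, hμ.rng_eq.symm⟩, .inr ⟨p, hp, hν.rng_eq.symm⟩⟩

end Steinberg

section Diagonal

variable {R : Type} [CommRing R]

theorem unit_mem_unitSet {S : Set (InfPath G)} {x : InfPath G} : unit x ∈ unitSet S ↔ x ∈ S :=
  ⟨fun ⟨_, hy, h⟩ => by rwa [show x = _ from congrArg Prod.fst h],
    fun hx => ⟨x, hx, rfl⟩⟩

theorem unitSet_subset_range_unit (S : Set (InfPath G)) : unitSet S ⊆ range unit :=
  fun _ ⟨x, _, h⟩ => ⟨x, h.symm⟩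

theorem support_subset_range_unit_of_mem_diag {f : GTrip G → R} (hf : f ∈ Diag R G) :
    support f ⊆ range unit := by
  induction hf using Submodule.span_induction with
  | mem f hf =>
    obtain ⟨μ, rfl⟩ := hf
    exact support_indicator_subset.trans (unitSet_subset_range_unit _)
  | zero => simp
  | add f g _ _ hf hg => exact (support_add f g).trans (union_subset hf hg)
  | smul c f _ hf => exact (support_const_smul_subset c f).trans hf

theorem indicator_unitSet_rng_eq_mem_diag (v : G.V) :
    indicator (unitSet {x : InfPath G | x.rng = v}) (1 : GTrip G → R) ∈ Diag R G := by
  rcases isEmpty_or_nonempty G.E with hE | ⟨⟨e⟩⟩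
  · have : IsEmpty (InfPath G) := ⟨fun x => hE.false (x.edges 0)⟩
    rw [eq_empty_of_isEmpty (unitSet _), indicator_empty]
    exact zero_mem _
  · let μ : FinPath G := ⟨0, v, fun _ => e, by simp, by simp⟩
    have hμ : Zset μ = {x : InfPath G | x.rng = v} := by ext x; simp [Zset, μ]
    exact Submodule.subset_span ⟨μ, by rw [hμ]⟩

theorem indicator_unitSet_rng_mem_diag (F : Finset G.V) :
    indicator (unitSet {x : InfPath G | x.rng ∈ F}) (1 : GTrip G → R) ∈ Diag R G := by
  have hsum : indicator (unitSet {x : InfPath G | x.rng ∈ F}) (1 : GTrip G → R) =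
      ∑ v ∈ F, indicator (unitSet {x : InfPath G | x.rng = v}) 1 := by
    ext g
    rw [Finset.sum_apply]
    by_cases hg : g ∈ range unit
    · obtain ⟨x, rfl⟩ := hg
      simp [indicator_apply, unit_mem_unitSet]
    · have hS : ∀ S, g ∉ unitSet S := fun S h => hg (unitSet_subset_range_unit S h)
      simp [hS]
  rw [hsum]
  exact Submodule.sum_mem _ fun v _ => indicator_unitSet_rng_eq_mem_diag v

end Diagonal

section Convolution

variable {R : Type} [CommRing R]

theorem conv_apply (f g : GTrip G → R) (γ : GTrip G) :
    conv f g γ = ∑ᶠ p : ℤ × InfPath G, f (γ.1, p) * g (p.2, -p.1 + γ.2.1, γ.2.2) := by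
  have hfib : {η : GTrip G | η.1 = γ.1} = range (Prod.mk γ.1) :=
    ext fun η => ⟨fun h => ⟨η.2, by rw [← h]⟩, by rintro ⟨p, rfl⟩; rfl⟩
  rw [conv, hfib, finsum_mem_range (Prod.mk_right_injective γ.1)]
  rfl

theorem conv_apply_of_support_subset_range_unit_right {m A : GTrip G → R}
    (hA : support A ⊆ range unit) (γ : GTrip G) : conv m A γ = m γ * A (unit γ.2.2) := by
  rw [conv_apply, finsum_eq_single _ (γ.2.1, γ.2.2)]
  · simp [unit]
  intro p hp
  refine mul_eq_zero_of_right _ (not_ne_iff.1 fun hne => hp ?_)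
  obtain ⟨z, hz⟩ := hA hne
  simp only [unit, Prod.mk.injEq] at hz
  exact Prod.ext (by omega) (hz.1.symm.trans hz.2.2)

theorem conv_apply_of_support_subset_range_unit_left {m A : GTrip G → R}
    (hA : support A ⊆ range unit) (γ : GTrip G) : conv A m γ = A (unit γ.1) * m γ := by
  rw [conv_apply, finsum_eq_single _ (0, γ.1)]
  · simp [unit]
  intro p hp
  refine mul_eq_zero_of_left (not_ne_iff.1 fun hne => hp ?_) _
  obtain ⟨z, hz⟩ := hA hne
  simp only [unit, Prod.mk.injEq] at hz
  rw [← hz.2, hz.1]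

theorem conv_indicator_unitSet {m : GTrip G → R} {U : Set (InfPath G)}
    (hm : ∀ g, m g ≠ 0 → g.2.2 ∈ U) : conv m (indicator (unitSet U) 1) = m := by
  ext γ
  rw [conv_apply_of_support_subset_range_unit_right
    (support_indicator_subset.trans (unitSet_subset_range_unit U))]
  by_cases hγ : m γ = 0
  · rw [hγ, zero_mul]
  · rw [indicator_of_mem (unit_mem_unitSet.2 (hm γ hγ)), Pi.one_apply, mul_one]

theorem conv_assoc_apply {f g h : GTrip G → R} (γ : GTrip G)
    (hf : (support fun p : ℤ × InfPath G => f (γ.1, p)).Finite)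
    (hh : (support fun q : InfPath G × ℤ => h (q.1, q.2, γ.2.2)).Finite) :
    conv (conv f g) h γ = conv f (conv g h) γ := by
  have hφ : Injective fun q : ℤ × InfPath G => (q.2, -q.1 + γ.2.1) := fun q q' hq => by
    simp only [Prod.mk.injEq] at hq
    exact Prod.ext (by omega) hq.1
  set S := hf.toFinset
  set T := (hh.preimage hφ.injOn).toFinset
  have hL : ∀ q, conv f g (γ.1, q) = ∑ p ∈ S, f (γ.1, p) * g (p.2, -p.1 + q.1, q.2) := by
    intro q
    rw [conv_apply]
    exact finsum_eq_sum_of_support_subset _ fun p hp => by simpa [S] using left_ne_zero_of_mul hp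
  have hR : ∀ p : ℤ × InfPath G, conv g h (p.2, -p.1 + γ.2.1, γ.2.2) =
      ∑ q ∈ T, g (p.2, -p.1 + q.1, q.2) * h (q.2, -q.1 + γ.2.1, γ.2.2) := by
    intro p
    rw [conv_apply, ← finsum_comp_equiv ((Equiv.addLeft (-p.1)).prodCongr (Equiv.refl _))]
    refine (finsum_congr fun q => ?_).trans
      (finsum_eq_sum_of_support_subset _ fun q hq => by simpa [T] using right_ne_zero_of_mul hq)
    simp only [Equiv.prodCongr_apply, Equiv.coe_addLeft, Equiv.coe_refl, Prod.map_fst,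
      Prod.map_snd, id_eq]
    congr 4
    ring
  calc conv (conv f g) h γ = ∑ q ∈ T, conv f g (γ.1, q) * h (q.2, -q.1 + γ.2.1, γ.2.2) := by
        rw [conv_apply]
        exact finsum_eq_sum_of_support_subset _ fun q hq => by
          simpa [T] using right_ne_zero_of_mul hq
    _ = ∑ q ∈ T, ∑ p ∈ S, f (γ.1, p) * g (p.2, -p.1 + q.1, q.2) *
          h (q.2, -q.1 + γ.2.1, γ.2.2) := by simp_rw [hL, Finset.sum_mul]
    _ = ∑ p ∈ S, f (γ.1, p) * conv g h (p.2, -p.1 + γ.2.1, γ.2.2) := by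
        rw [Finset.sum_comm]
        simp_rw [hR, Finset.mul_sum, mul_assoc]
    _ = conv f (conv g h) γ := by
        rw [conv_apply]
        exact (finsum_eq_sum_of_support_subset _ fun p hp => by
          simpa [S] using left_ne_zero_of_mul hp).symm

end Convolution

section Normalizer

variable {R : Type} [CommRing R] [StarRing R]

theorem exists_ne_zero_snd_snd_eq_of_mem_domSet {n : GTrip G → R} {x : InfPath G}
    (hx : x ∈ domSet n) : ∃ g, n g ≠ 0 ∧ g.2.2 = x := by
  obtain ⟨η, -, hη⟩ := exists_ne_zero_of_finsum_mem_ne_zero hx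
  exact ⟨_, right_ne_zero_of_mul hη, rfl⟩

theorem IsNormalizer.conv_starf_mem_diag {n : GTrip G → R} (hn : IsNormalizer n) :
    conv n (starf n) ∈ Diag R G ∧ conv (starf n) n ∈ Diag R G := by
  obtain ⟨F, hF⟩ := exists_finset_rng_of_mem_steinberg hn.1
  have hnd : conv n (indicator (unitSet {x | x.rng ∈ F}) 1) = n :=
    conv_indicator_unitSet fun g hg => (hF g hg).2
  have hsd : conv (starf n) (indicator (unitSet {x | x.rng ∈ F}) 1) = starf n :=
    conv_indicator_unitSet fun g hg => (hF (ginv g) fun h => hg (by simp [starf, h])).1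
  obtain ⟨h1, h2⟩ := hn.2 _ (indicator_unitSet_rng_mem_diag F)
  rw [hnd] at h1
  rw [hsd] at h2
  exact ⟨h1, h2⟩

end Normalizer

end LPA

open LPA in
theorem alpha_mem_ran_general {G : DirGraph}
    {R : Type} [CommRing R] [IsDomain R] [StarRing R]
    (n : GTrip G → R) (hn : IsNormalizer n) (x : InfPath G) (hx : x ∈ domSet n) :
    alphaFun n x ∈ ranSet n := by
  have hex := exists_ne_zero_snd_snd_eq_of_mem_domSet hx
  obtain ⟨hg, hgx⟩ := hex.choose_spec
  set g := hex.choose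
  have hα : alphaFun n x = g.1 := dif_pos hex
  obtain ⟨hran, hdom⟩ := hn.conv_starf_mem_diag
  have hassoc : conv (conv n (starf n)) n g = conv n (conv (starf n) n) g :=
    conv_assoc_apply g (finite_support_rangeFiber_of_mem_steinberg hn.1 g.1)
      (finite_support_sourceFiber_of_mem_steinberg hn.1 g.2.2)
  rw [conv_apply_of_support_subset_range_unit_left (support_subset_range_unit_of_mem_diag hran),
    conv_apply_of_support_subset_range_unit_right (support_subset_range_unit_of_mem_diag hdom),
    hgx] at hassoc
  rw [hα]
  intro h0
  rw [h0, zero_mul] at hassoc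
  exact mul_ne_zero hg hx hassoc.symm

open LPA in
/-- If `x ∈ dom(n)` then `α_n(x) ∈ ran(n)`. -/
theorem alpha_mem_ran {G : DirGraph} (hrf : RowFinite G) (hns : NoSources G)
    {R : Type} [CommRing R] [IsDomain R] [StarRing R]
    (n : GTrip G → R) (hn : IsNormalizer n) (x : InfPath G) (hx : x ∈ domSet n) :
    alphaFun n x ∈ ranSet n :=
  alpha_mem_ran_general n hn x hx
end

section
/- Let $x$ be an isolated point of the infinite path space $E^\infty$ and $n$ a normalizer of $D(E)$ in $A_R(G_E)$ over an integral domain $R$. If $p_x n p_x \neq 0$, then $p_x n p_x = r \mathbf{1}_{\{(x,k,x)\}}$ for some $k \in \mathbb{Z}$ and $r \in R$, where $p_x = \mathbf{1}_{\{x\}}$. -/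
open scoped Classical BigOperators

/-!
Since `x` is isolated, `{x}` is a cylinder set, so `p_x` lies in the diagonal; as `n` normalizes
it, `n^* p_x n` lies in the diagonal too and is therefore supported in degree `0`. Its value at
`(x, c, x)` is the autocorrelation `∑ₜ star (a t) * a (t + c)` of the isotropy coefficients
`a t = n (x, t, x)` of `p_x n p_x`, finitely many of which are nonzero. At the lag `c = max - min`
of their support only the product of the two extreme coefficients survives, which is nonzero over
a domain; so the support is a single degree.
-/

section Correlation

variable {R : Type*} [Semiring R]

theorem finsum_mul_shift_eq_of_bounds {a b : ℤ → R} {A B : ℤ}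
    (hA : A ∈ upperBounds (Function.support a)) (hB : B ∈ lowerBounds (Function.support b)) :
    ∑ᶠ t, b t * a (t + (A - B)) = b B * a A := by
  rw [finsum_eq_single _ B, add_sub_cancel]
  intro t ht
  by_contra hne
  have hb : B ≤ t := hB (left_ne_zero_of_mul hne)
  have ha : t + (A - B) ≤ A := hA (right_ne_zero_of_mul hne)
  exact ht (by omega)

theorem exists_support_subset_singleton_of_autocorrelation_eq_zero [NoZeroDivisors R]
    [StarRing R] {a : ℤ → R} (hfin : (Function.support a).Finite)
    (h : ∀ c ≠ 0, ∑ᶠ t, star (a t) * a (t + c) = 0) : ∃ k, Function.support a ⊆ {k} := by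
  rcases (Function.support a).eq_empty_or_nonempty with hempty | hne
  · exact ⟨0, hempty ▸ Set.empty_subset _⟩
  obtain ⟨A, hAa, hA⟩ := Set.exists_max_image _ id hfin hne
  obtain ⟨B, hBa, hB⟩ := Set.exists_min_image _ id hfin hne
  simp only [id] at hA hB
  have hstar : Function.support (fun t => star (a t)) = Function.support a := by
    ext t; simp
  have hAB : A - B = 0 := by_contra fun hc => mul_ne_zero (star_ne_zero.2 hBa) hAa <| by
    rw [← finsum_mul_shift_eq_of_bounds (b := fun t => star (a t)) (fun t ht => hA t ht)
      (hstar ▸ fun t ht => hB t ht), h _ hc]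
  exact ⟨A, fun j hj => Set.mem_singleton_iff.2 (by have := hA j hj; have := hB j hj; omega)⟩

end Correlation

theorem finsum_mem_eq_ite_of_eq_zero {α M : Type*} [AddCommMonoid M] {S : Set α} {F : α → M}
    (a : α) (h : ∀ b ∈ S, b ≠ a → F b = 0) :
    ∑ᶠ b ∈ S, F b = if a ∈ S then F a else 0 := by
  rw [finsum_mem_def, finsum_eq_single _ a, Set.indicator_apply]
  intro b hb
  by_cases hbS : b ∈ S
  · rw [Set.indicator_of_mem hbS, h b hbS hb]
  · exact Set.indicator_of_notMem hbS _

namespace LPA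

variable {G : DirGraph}

def InfPath.prefix (x : InfPath G) (N : ℕ) : FinPath G :=
  ⟨N, x.rng, x.edges, fun i _ => x.compat i, fun _ => rfl⟩

theorem mem_Zset_prefix (x : InfPath G) (N : ℕ) : x ∈ Zset (x.prefix N) :=
  ⟨fun _ _ => rfl, rfl⟩

theorem Zset_prefix_antitone (x : InfPath G) : Antitone fun N => Zset (x.prefix N) :=
  fun _ _ hMN _ ⟨hy, hr⟩ => ⟨fun i hi => hy i (lt_of_lt_of_le hi hMN), hr⟩

theorem Zset_prefix_subset_of_mem {x : InfPath G} {μ : FinPath G} (hx : x ∈ Zset μ) :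
    Zset (x.prefix μ.len) ⊆ Zset μ :=
  fun _ ⟨hy, hr⟩ => ⟨fun i hi => (hy i hi).trans (hx.1 i hi), hr.trans hx.2⟩

theorem exists_Zset_prefix_subset_of_isOpen {U : Set (InfPath G)} (hU : IsOpen U)
    {x : InfPath G} (hx : x ∈ U) : ∃ N, Zset (x.prefix N) ⊆ U := by
  induction hU with
  | basic s hs =>
    obtain ⟨μ, rfl⟩ := hs
    exact ⟨μ.len, Zset_prefix_subset_of_mem hx⟩
  | univ => exact ⟨0, Set.subset_univ _⟩
  | inter s t _ _ ihs iht =>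
    obtain ⟨M, hM⟩ := ihs hx.1
    obtain ⟨N, hN⟩ := iht hx.2
    exact ⟨max M N, Set.subset_inter ((Zset_prefix_antitone x (le_max_left M N)).trans hM)
      ((Zset_prefix_antitone x (le_max_right M N)).trans hN)⟩
  | sUnion S _ ih =>
    obtain ⟨s, hs, hxs⟩ := hx
    obtain ⟨N, hN⟩ := ih s hs hxs
    exact ⟨N, hN.trans (Set.subset_sUnion_of_mem hs)⟩

variable {R : Type} [CommRing R]

theorem ppt_mem_Diag_of_isOpen {x : InfPath G} (hx : IsOpen ({x} : Set (InfPath G))) :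
    ppt R x ∈ Diag R G := by
  obtain ⟨N, hN⟩ := exists_Zset_prefix_subset_of_isOpen hx rfl
  have hZ : Zset (x.prefix N) = {x} := Set.Subset.antisymm hN (by simpa using mem_Zset_prefix x N)
  refine Submodule.subset_span ⟨x.prefix N, ?_⟩
  rw [hZ, ppt]
  congr
  ext g
  simp [unitSet]

theorem homog_zero_of_mem_Diag {d : GTrip G → R} (hd : d ∈ Diag R G) : Homog 0 d := by
  suffices ∀ g : GTrip G, g.2.1 ≠ 0 → d g = 0 from fun g hg => by_contra (hg ∘ this g)
  induction hd using Submodule.span_induction with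
  | mem f hf =>
    obtain ⟨μ, rfl⟩ := hf
    intro g hg
    refine Set.indicator_of_notMem ?_ _
    rintro ⟨y, -, rfl⟩
    exact hg rfl
  | zero => exact fun _ _ => rfl
  | add f h _ _ hf hh => exact fun g hg => by simp [hf g hg, hh g hg]
  | smul r f _ hf => exact fun g hg => by simp [hf g hg]

theorem finite_degrees_of_mem_Steinberg {f : GTrip G → R} (hf : f ∈ Steinberg R G) :
    ((fun g : GTrip G => g.2.1) '' Function.support f).Finite := by
  induction hf using Submodule.span_induction with
  | mem f hf =>
    obtain ⟨μ, ν, -, rfl⟩ := hf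
    refine (Set.finite_singleton ((μ.len : ℤ) - ν.len)).subset ?_
    rintro _ ⟨g, hg, rfl⟩
    obtain ⟨-, -, -, hdeg⟩ := Set.support_indicator_subset hg
    exact hdeg
  | zero => simp
  | add f h _ _ hf hh =>
    exact (hf.union hh).subset
      ((Set.image_mono (Function.support_add f h)).trans (Set.image_union _ _ _).subset)
  | smul r f _ hf => exact hf.subset (Set.image_mono (Function.support_const_smul_subset r f))

theorem ppt_apply (x : InfPath G) (g : GTrip G) : ppt R x g = if g = unit x then 1 else 0 := by
  simp [ppt, Set.indicator_apply]

theorem conv_ppt_left (f : GTrip G → R) (x : InfPath G) (γ : GTrip G) :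
    conv (ppt R x) f γ = if γ.1 = x then f γ else 0 := by
  rw [conv, finsum_mem_eq_ite_of_eq_zero (unit x)
    (fun b _ hb => by rw [ppt_apply, if_neg hb, zero_mul])]
  obtain ⟨y, k, z⟩ := γ
  by_cases hy : y = x
  · subst hy; simp [unit, gmul, ginv, ppt_apply]
  · simp [unit, hy, Ne.symm hy]

theorem conv_ppt_right (f : GTrip G → R) (x : InfPath G) (γ : GTrip G) :
    conv f (ppt R x) γ = if γ.2.2 = x then f (γ.1, γ.2.1, x) else 0 := by
  rw [conv, finsum_mem_eq_ite_of_eq_zero (γ.1, γ.2.1, x) ?_]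
  · obtain ⟨y, k, z⟩ := γ
    by_cases hz : z = x <;> simp [hz, gmul, ginv, unit, ppt_apply, Prod.ext_iff]
  · rintro ⟨u, t, v⟩ hu hne
    rw [ppt_apply, if_neg, mul_zero]
    simp only [gmul, ginv, unit, Prod.mk.injEq]
    rintro ⟨rfl, ht, -⟩
    exact hne (Prod.ext hu (Prod.ext (by simp only; omega) rfl))

theorem ppt_conv_conv_ppt_apply (n : GTrip G → R) (x : InfPath G) (γ : GTrip G) :
    conv (conv (ppt R x) n) (ppt R x) γ =
      if γ.1 = x ∧ γ.2.2 = x then n (x, γ.2.1, x) else 0 := by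
  rw [conv_ppt_right, conv_ppt_left]
  by_cases h1 : γ.1 = x <;> by_cases h2 : γ.2.2 = x <;> simp [h1, h2]

theorem starf_conv_ppt_conv_apply [StarRing R] (n : GTrip G → R) (x : InfPath G) (c : ℤ) :
    conv (conv (starf n) (ppt R x)) n (x, c, x) =
      ∑ᶠ t : ℤ, star (n (x, t, x)) * n (x, t + c, x) := by
  let iso : ℤ → GTrip G := fun t => (x, -t, x)
  have hiso : Function.Injective iso := fun s t h => neg_injective (congrArg (·.2.1) h)
  calc conv (conv (starf n) (ppt R x)) n (x, c, x)
      = ∑ᶠ η ∈ Set.range iso, conv (starf n) (ppt R x) η * n (gmul (ginv η) (x, c, x)) := by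
        refine finsum_mem_inter_support_eq' _ _ _ fun η hη => ?_
        obtain ⟨u, t, v⟩ := η
        have hv : v = x := by
          by_contra hv
          exact hη (by simp [conv_ppt_right, hv])
        exact ⟨fun hu => ⟨-t, Prod.ext hu.symm (Prod.ext (neg_neg t) hv.symm)⟩,
          fun ⟨_, hs⟩ => (congrArg Prod.fst hs).symm⟩
    _ = ∑ᶠ t : ℤ, star (n (x, t, x)) * n (x, t + c, x) := by
        rw [finsum_mem_range hiso]
        refine finsum_congr fun t => ?_
        simp [iso, conv_ppt_right, starf, gmul, ginv]

theorem ppt_conv_conv_ppt_eq_indicator (n : GTrip G → R) (x : InfPath G) {k : ℤ}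
    (hk : Function.support (fun t => n (x, t, x)) ⊆ {k}) :
    conv (conv (ppt R x) n) (ppt R x) =
      Set.indicator ({(x, k, x)} : Set (GTrip G)) (fun _ => n (x, k, x)) := by
  rw [Function.support_subset_iff'] at hk
  funext ⟨y, j, z⟩
  rw [ppt_conv_conv_ppt_apply, Set.indicator_apply]
  by_cases hy : y = x <;> by_cases hz : z = x <;> by_cases hj : j = k <;>
    simp [hy, hz, hj, hk j]

end LPA

open LPA in
theorem pnp_isolated_general {G : DirGraph}
    {R : Type} [CommRing R] [IsDomain R] [StarRing R]
    (n : GTrip G → R) (hn : IsNormalizer n) (x : InfPath G)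
    (hx : IsOpen ({x} : Set (InfPath G))) :
    ∃ (k : ℤ) (r : R),
      conv (conv (ppt R x) n) (ppt R x) =
        Set.indicator ({(x, k, x)} : Set (GTrip G)) (fun _ => r) := by
  set a : ℤ → R := fun t => n (x, t, x)
  have hdeg : Homog 0 (conv (conv (starf n) (ppt R x)) n) :=
    homog_zero_of_mem_Diag (hn.2 _ (ppt_mem_Diag_of_isOpen hx)).2
  have hcorr : ∀ c ≠ 0, ∑ᶠ t, star (a t) * a (t + c) = 0 := fun c hc => by
    rw [← starf_conv_ppt_conv_apply]
    exact by_contra (hc ∘ hdeg (x, c, x))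
  have hfin : (Function.support a).Finite :=
    (finite_degrees_of_mem_Steinberg hn.1).subset fun t ht => ⟨(x, t, x), ht, rfl⟩
  obtain ⟨k, hk⟩ := exists_support_subset_singleton_of_autocorrelation_eq_zero hfin hcorr
  exact ⟨k, a k, ppt_conv_conv_ppt_eq_indicator n x hk⟩

open LPA in
/-- If `x` is isolated and `p_x n p_x ≠ 0`, then `p_x n p_x = r 𝟙_{(x,k,x)}`. -/
theorem pnp_isolated {G : DirGraph} (hrf : RowFinite G) (hns : NoSources G)
    {R : Type} [CommRing R] [IsDomain R] [StarRing R]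
    (n : GTrip G → R) (hn : IsNormalizer n) (x : InfPath G)
    (hx : IsOpen ({x} : Set (InfPath G)))
    (h0 : conv (conv (ppt R x) n) (ppt R x) ≠ 0) :
    ∃ (k : ℤ) (r : R),
      conv (conv (ppt R x) n) (ppt R x) =
        Set.indicator ({(x, k, x)} : Set (GTrip G)) (fun _ => r) :=
  pnp_isolated_general n hn x hx
end
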